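/- arXiv:2410.11032 — 2 statements merged into one kernel-verified Lean document; each statement's English description precedes it below -/
import Mathlib

section
/- Let A and B be skew-symmetric bilinear forms on a finite-dimensional vector space V over ℂ with core subspace K. Let μ₁, …, μ_D be distinct scalars and v_i ∈ Ker(A + μ_i B) arbitrary vectors. Then the subspace U = K + span{v₁, …, v_D} is isotropic with respect to every form A + λB of the pencil. -/
/-! Every generator of `U` lies in a radical `Ker (A + αB)`. For `x ∈ Ker (A + αB)` and
`y ∈ Ker (A + βB)` the affine function `γ ↦ (A + γB) x y` vanishes at `α`, and by
skew-symmetry also at `β`, so it vanishes identically when `α ≠ β`. When `α = β` is regular,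
`B` maps `Ker (A + αB)` into `Im (A + αB)`: otherwise, since rank is lower semicontinuous along
the pencil, `A + (α + t)B` would have rank larger than the maximal one for generic `t`.
Then `B x y = (A + αB) z y = -(A + αB) y z = 0`. -/

open Module

variable {V : Type*} [AddCommGroup V] [Module ℂ V]

/-- The rank of a bilinear form. -/
noncomputable def formRank (C : V →ₗ[ℂ] V →ₗ[ℂ] ℂ) : ℕ :=
  finrank ℂ (LinearMap.range C)

/-- `λ` is a regular value of the pencil `{A + λB}`. -/
def IsRegularValue (A B : V →ₗ[ℂ] V →ₗ[ℂ] ℂ) (lam : ℂ) : Prop :=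
  ∀ mu : ℂ, formRank (A + mu • B) ≤ formRank (A + lam • B)

/-- The core subspace: sum of radicals `Ker (A + λB)` over regular `λ`. -/
noncomputable def coreSubspace (A B : V →ₗ[ℂ] V →ₗ[ℂ] ℂ) : Submodule ℂ V :=
  ⨆ (lam : ℂ) (_ : IsRegularValue A B lam), LinearMap.ker (A + lam • B)

open Function Submodule

namespace LinearMap

variable {K E F : Type*} [Field K] [AddCommGroup E] [Module K E] [AddCommGroup F] [Module K F]
  [FiniteDimensional K E]

theorem finite_setOf_not_injective_add_smul {f : E →ₗ[K] F} (hf : Injective f) (g : E →ₗ[K] F) :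
    {t : K | ¬Injective (f + t • g)}.Finite := by
  obtain ⟨φ, hφ⟩ := f.exists_leftInverse_of_injective (ker_eq_bot.2 hf)
  -- a kernel vector of `f + t • g` is an eigenvector of `φ ∘ g` with eigenvalue `-t⁻¹`
  refine ((Module.End.finite_hasEigenvalue (φ ∘ₗ g)).preimage
    (neg_injective.comp inv_injective).injOn).subset fun t ht => ?_
  obtain ⟨e, he, he0⟩ : ∃ e, (f + t • g) e = 0 ∧ e ≠ 0 := by
    simpa [injective_iff_map_eq_zero] using ht
  have ht0 : t ≠ 0 := by
    rintro rfl
    exact he0 (hf (by simpa using he))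
  have hφe : e + t • φ (g e) = 0 := by
    simpa [← LinearMap.comp_apply φ f, hφ] using congrArg φ he
  refine Module.End.hasEigenvalue_of_hasEigenvector ⟨Module.End.mem_eigenspace_iff.2 ?_, he0⟩
  change φ (g e) = (-t⁻¹) • e
  rw [← inv_smul_smul₀ ht0 (φ (g e)), eq_neg_of_add_eq_zero_right hφe, smul_neg, neg_smul]

theorem finite_setOf_finrank_range_add_smul_lt (f g : E →ₗ[K] F) :
    {t : K | finrank K (range (f + t • g)) < finrank K (range f)}.Finite := by
  obtain ⟨X, hX⟩ := (ker f).exists_isCompl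
  have hinj : Injective (f ∘ₗ X.subtype) := by
    rw [← ker_eq_bot, ker_comp, ← disjoint_iff_comap_eq_bot, disjoint_comm]
    exact hX.disjoint
  refine (finite_setOf_not_injective_add_smul hinj (g ∘ₗ X.subtype)).subset fun t ht hinjt => ?_
  rw [← smul_comp, ← add_comp] at hinjt
  have hle : finrank K X ≤ finrank K (range (f + t • g)) :=
    (finrank_range_of_inj hinjt).symm.le.trans (finrank_mono (range_comp_le_range _ _))
  have hrank := finrank_range_add_finrank_ker f
  have hcompl := finrank_add_eq_of_isCompl hX
  simp only [Set.mem_ofPred_eq] at ht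
  omega

theorem mem_range_of_forall_finrank_range_add_smul_le [Infinite K] {C B : E →ₗ[K] F}
    (h : ∀ t : K, finrank K (range (C + t • B)) ≤ finrank K (range C)) {u : E}
    (hu : u ∈ ker C) : B u ∈ range C := by
  by_contra hBu
  -- `G (x, s) = C x + s • B u` has rank `> rank C`, and for `t ≠ 0` its perturbation
  -- `G + t • (B, 0)` takes values in `range (C + t • B)` because `B u = (C + t • B) (t⁻¹ • u)`
  let G : E × K →ₗ[K] F := C.coprod (toSpanSingleton K F (B u))
  obtain ⟨t, ht0, ht⟩ : ∃ t : K, t ≠ 0 ∧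
      finrank K (range G) ≤ finrank K (range (G + t • B.coprod 0)) := by
    obtain ⟨t, ht⟩ := ((finite_setOf_finrank_range_add_smul_lt G (B.coprod 0)).union
      (Set.finite_singleton 0)).infinite_compl.nonempty
    simp only [Set.mem_compl_iff, Set.mem_union, Set.mem_ofPred_eq, Set.mem_singleton_iff,
      not_or, not_lt] at ht
    exact ⟨t, ht.2, ht.1⟩
  have hCG : finrank K (range C) < finrank K (range G) := by
    refine finrank_lt_finrank_of_lt (lt_of_le_of_ne ?_ fun hCG => hBu ?_)
    · rw [range_coprod]
      exact le_sup_left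
    · rw [hCG, range_coprod, range_toSpanSingleton]
      exact mem_sup_right (mem_span_singleton_self _)
  have hGt : range (G + t • B.coprod 0) ≤ range (C + t • B) := by
    rintro _ ⟨⟨x, s⟩, rfl⟩
    refine ⟨x + (t⁻¹ * s) • u, ?_⟩
    simp [G, mem_ker.1 hu, smul_smul, ht0]
    abel
  have := finrank_mono hGt
  have := h t
  omega

theorem apply_eq_zero_of_mem_span {R M N P : Type*} [CommSemiring R]
    [AddCommMonoid M] [Module R M] [AddCommMonoid N] [Module R N] [AddCommMonoid P] [Module R P]
    (Φ : M →ₗ[R] N →ₗ[R] P) {s : Set M} {t : Set N} (h : ∀ x ∈ s, ∀ y ∈ t, Φ x y = 0)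
    {x : M} {y : N} (hx : x ∈ span R s) (hy : y ∈ span R t) : Φ x y = 0 := by
  suffices span R s ≤ ker (Φ.flip y) from this hx
  exact span_le.2 fun x' hx' => (span_le (p := ker (Φ x'))).2 (h x' hx') hy

end LinearMap

section Pencil

variable {K M : Type*} [Field K] [AddCommGroup M] [Module K M] {A B : M →ₗ[K] M →ₗ[K] K}

theorem pencil_apply_antisymm (hA : ∀ u v, A u v = -A v u) (hB : ∀ u v, B u v = -B v u)
    (γ : K) (x y : M) : (A + γ • B) x y = -(A + γ • B) y x := by
  simp only [LinearMap.add_apply, LinearMap.smul_apply, smul_eq_mul, hA x y, hB x y]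
  ring

theorem pencil_apply_eq_zero_of_B_apply_eq_zero {α : K} {x y : M} (hx : (A + α • B) x y = 0)
    (hB : B x y = 0) (γ : K) : (A + γ • B) x y = 0 := by
  simp only [LinearMap.add_apply, LinearMap.smul_apply, smul_eq_mul] at hx ⊢
  rw [hB, mul_zero] at hx ⊢
  exact hx

theorem pencil_apply_eq_zero_of_ne (hA : ∀ u v, A u v = -A v u) (hB : ∀ u v, B u v = -B v u)
    {α β : K} (hαβ : α ≠ β) {x y : M} (hx : x ∈ LinearMap.ker (A + α • B))
    (hy : y ∈ LinearMap.ker (A + β • B)) (γ : K) : (A + γ • B) x y = 0 := by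
  have hxy : (A + α • B) x y = 0 := by rw [LinearMap.mem_ker.1 hx, LinearMap.zero_apply]
  have hyx : (A + β • B) y x = 0 := by rw [LinearMap.mem_ker.1 hy, LinearMap.zero_apply]
  refine pencil_apply_eq_zero_of_B_apply_eq_zero hxy ?_ γ
  simp only [LinearMap.add_apply, LinearMap.smul_apply, smul_eq_mul, hA y x, hB y x] at hxy hyx
  have : (α - β) * B x y = 0 := by linear_combination hxy + hyx
  exact (mul_eq_zero.1 this).resolve_left (sub_ne_zero.2 hαβ)

end Pencil

theorem pencil_apply_eq_zero_of_isRegularValue {V : Type*} [AddCommGroup V] [Module ℂ V]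
    [FiniteDimensional ℂ V] {A B : V →ₗ[ℂ] V →ₗ[ℂ] ℂ} (hA : ∀ u v, A u v = -A v u)
    (hB : ∀ u v, B u v = -B v u) {α β : ℂ} (hα : IsRegularValue A B α) {x y : V}
    (hx : x ∈ LinearMap.ker (A + α • B)) (hy : y ∈ LinearMap.ker (A + β • B)) (γ : ℂ) :
    (A + γ • B) x y = 0 := by
  rcases eq_or_ne α β with rfl | hαβ
  · obtain ⟨z, hz⟩ : B x ∈ LinearMap.range (A + α • B) := by
      refine LinearMap.mem_range_of_forall_finrank_range_add_smul_le (fun t => ?_) hx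
      rw [add_assoc, ← add_smul]
      exact hα (α + t)
    have hBxy : B x y = 0 := by
      rw [← hz, pencil_apply_antisymm hA hB, LinearMap.mem_ker.1 hy, LinearMap.zero_apply,
        neg_zero]
    have hxy : (A + α • B) x y = 0 := by rw [LinearMap.mem_ker.1 hx, LinearMap.zero_apply]
    exact pencil_apply_eq_zero_of_B_apply_eq_zero hxy hBxy γ
  · exact pencil_apply_eq_zero_of_ne hA hB hαβ hx hy γ

/-- Let `A, B` be skew-symmetric bilinear forms on a
finite-dimensional complex vector space with core subspace `K`. For distinct
scalars `μ₁, …, μ_D` and vectors `vᵢ ∈ Ker(A + μᵢB)`, the subspace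
`U = K + span{v₁, …, v_D}` is isotropic with respect to every form `A + λB`. -/
theorem core_plus_radical_vectors_isotropic
    {V : Type*} [AddCommGroup V] [Module ℂ V] [FiniteDimensional ℂ V]
    (A B : V →ₗ[ℂ] V →ₗ[ℂ] ℂ)
    (hA : ∀ u v, A u v = - A v u) (hB : ∀ u v, B u v = - B v u)
    (D : ℕ) (mu : Fin D → ℂ) (hmu : Function.Injective mu)
    (v : Fin D → V) (hv : ∀ i, v i ∈ LinearMap.ker (A + mu i • B)) :
    ∀ (lam : ℂ),
      ∀ u ∈ coreSubspace A B ⊔ Submodule.span ℂ (Set.range v),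
      ∀ w ∈ coreSubspace A B ⊔ Submodule.span ℂ (Set.range v),
        (A + lam • B) u w = 0 := by
  intro lam
  set R : Set V := ⋃ (α : ℂ) (_ : IsRegularValue A B α), LinearMap.ker (A + α • B)
  have hU : coreSubspace A B ⊔ span ℂ (Set.range v) = span ℂ (R ∪ Set.range v) := by
    rw [span_union, span_iUnion₂]
    simp only [span_eq, coreSubspace]
  have hR : ∀ x ∈ R, ∃ α, IsRegularValue A B α ∧ x ∈ LinearMap.ker (A + α • B) := by
    simpa only [R, Set.mem_iUnion, SetLike.mem_coe, exists_prop] using fun _ => id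
  have hgen : ∀ x ∈ R ∪ Set.range v, ∀ y ∈ R ∪ Set.range v, (A + lam • B) x y = 0 := by
    rintro x (hx | ⟨i, rfl⟩) y (hy | ⟨j, rfl⟩)
    · obtain ⟨α, hα, hx⟩ := hR x hx
      obtain ⟨β, -, hy⟩ := hR y hy
      exact pencil_apply_eq_zero_of_isRegularValue hA hB hα hx hy lam
    · obtain ⟨α, hα, hx⟩ := hR x hx
      exact pencil_apply_eq_zero_of_isRegularValue hA hB hα hx (hv j) lam
    · obtain ⟨β, hβ, hy⟩ := hR y hy
      rw [pencil_apply_antisymm hA hB,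
        pencil_apply_eq_zero_of_isRegularValue hA hB hβ hy (hv i) lam, neg_zero]
    · rcases eq_or_ne i j with rfl | hij
      · linear_combination pencil_apply_antisymm hA hB lam (v i) (v i) / 2
      · exact pencil_apply_eq_zero_of_ne hA hB (hmu.ne hij) (hv i) (hv j) lam
  rw [hU]
  exact fun u hu w hw => (A + lam • B).apply_eq_zero_of_mem_span hgen hu hw
end

section
/- For a pencil of skew-symmetric bilinear forms {A + λB} on a finite-dimensional complex vector space V with characteristic polynomial p(λ) and core subspace K, one has dim K = dim V − (1/2)·rk(pencil) − deg p, where rk(pencil) is the maximal rank of A + λB over λ. -/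
open Matrix Module

variable {V : Type*} [AddCommGroup V] [Module ℂ V]

/-- Jordan-type upper block: `λ` on the diagonal, `1` on the superdiagonal. -/
def jordanUpper (lam : ℂ) (m : ℕ) : Matrix (Fin m) (Fin m) ℂ :=
  fun i j => if (i : ℕ) = (j : ℕ) then lam else if (i : ℕ) + 1 = (j : ℕ) then 1 else 0

/-- The `2m × 2m` Jordan block of the pencil with eigenvalue `λ`. -/
def jordanBlockA (lam : ℂ) (m : ℕ) :
    Matrix (Fin m ⊕ Fin m) (Fin m ⊕ Fin m) ℂ :=
  Matrix.fromBlocks 0 (jordanUpper lam m) (-(jordanUpper lam m)ᵀ) 0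

/-- The standard symplectic `2m × 2m` block. -/
def jordanBlockB (m : ℕ) : Matrix (Fin m ⊕ Fin m) (Fin m ⊕ Fin m) ℂ :=
  Matrix.fromBlocks 0 (1 : Matrix (Fin m) (Fin m) ℂ) (-1) 0

/-- Upper rectangular part `δ_{ij}` of a Kronecker block for `A`. -/
def kronUpperA (k : ℕ) : Matrix (Fin (k - 1)) (Fin k) ℂ :=
  fun i j => if (i : ℕ) = (j : ℕ) then 1 else 0

/-- Upper rectangular part `δ_{i+1,j}` of a Kronecker block for `B`. -/
def kronUpperB (k : ℕ) : Matrix (Fin (k - 1)) (Fin k) ℂ :=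
  fun i j => if (i : ℕ) + 1 = (j : ℕ) then 1 else 0

/-- The `(2k-1) × (2k-1)` Kronecker block for `A`. -/
def kronBlockA (k : ℕ) :
    Matrix (Fin (k - 1) ⊕ Fin k) (Fin (k - 1) ⊕ Fin k) ℂ :=
  Matrix.fromBlocks 0 (kronUpperA k) (-(kronUpperA k)ᵀ) 0

/-- The `(2k-1) × (2k-1)` Kronecker block for `B`. -/
def kronBlockB (k : ℕ) :
    Matrix (Fin (k - 1) ⊕ Fin k) (Fin (k - 1) ⊕ Fin k) ℂ :=
  Matrix.fromBlocks 0 (kronUpperB k) (-(kronUpperB k)ᵀ) 0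

/-!
In the basis `b` the pencil `A + μ B` is block diagonal. The Jordan block of eigenvalue `λ` has
matrix `skewBlock (jordanUpper (λ + μ) n)`, and `jordanUpper (λ + μ) n` is triangular with
determinant `(λ + μ) ^ n`, so the block is nondegenerate unless `μ = -λ`. The Kronecker block with
`k` columns has matrix `skewBlock P` where the `(k - 1) × k` matrix `P` has a unit triangular
square part; hence its left kernel is zero and its right kernel is spanned by
`w_μ = ((-μ) ^ (k - 1 - j))_j`. So for `μ` outside the finite set `{-λ}` the kernel of `A + μ B`
is spanned by the `w_μ` placed in the second halves of the Kronecker blocks, and these vectors lie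
in the kernel for every `μ`; as regular values minimise the kernel dimension, the kernel at a
regular value is exactly their span. As `μ` runs through the infinitely many regular values the
Vandermonde-type vectors `w_μ` span `ℂ^k`, so the core subspace is the span of the second halves
of the Kronecker blocks, of dimension `Σ k_i`; the formula is then a count of basis vectors.
-/

namespace Matrix

variable {R m n : Type*} [CommRing R]

def skewBlock (P : Matrix m n R) : Matrix (m ⊕ n) (m ⊕ n) R :=
  fromBlocks 0 P (-Pᵀ) 0

theorem skewBlock_add_smul (P Q : Matrix m n R) (c : R) :
    skewBlock (P + c • Q) = skewBlock P + c • skewBlock Q := by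
  simp only [skewBlock, fromBlocks_smul, fromBlocks_add, transpose_add, transpose_smul, neg_add,
    smul_neg, smul_zero, add_zero]

variable [Fintype m] [Fintype n]

theorem vecMul_skewBlock_eq_zero_iff (P : Matrix m n R) (x : m ⊕ n → R) :
    x ᵥ* skewBlock P = 0 ↔ (x ∘ Sum.inl) ᵥ* P = 0 ∧ P *ᵥ (x ∘ Sum.inr) = 0 := by
  simp [skewBlock, vecMul_fromBlocks, vecMul_neg, vecMul_transpose, ← Sum.elim_zero_zero,
    Sum.elim_eq_iff, and_comm]

theorem vecMul_fromBlocks_zero_zero_eq_zero_iff (M₁ : Matrix m m R) (M₂ : Matrix n n R)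
    (x : m ⊕ n → R) :
    x ᵥ* fromBlocks M₁ 0 0 M₂ = 0 ↔ (x ∘ Sum.inl) ᵥ* M₁ = 0 ∧ (x ∘ Sum.inr) ᵥ* M₂ = 0 := by
  simp [vecMul_fromBlocks, ← Sum.elim_zero_zero, Sum.elim_eq_iff]

theorem vecMul_blockDiagonal'_eq_zero_iff {ι : Type*} [Fintype ι] [DecidableEq ι]
    {κ : ι → Type*} [∀ i, Fintype (κ i)] (D : ∀ i, Matrix (κ i) (κ i) R) (x : (Σ i, κ i) → R) :
    x ᵥ* blockDiagonal' D = 0 ↔ ∀ i, (fun j => x ⟨i, j⟩) ᵥ* D i = 0 := by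
  have key : ∀ i j, (x ᵥ* blockDiagonal' D) ⟨i, j⟩ = ((fun j => x ⟨i, j⟩) ᵥ* D i) j := by
    intro i j
    simp only [vecMul, dotProduct, ← Finset.univ_sigma_univ, Finset.sum_sigma]
    rw [Finset.sum_eq_single i]
    · simp [blockDiagonal'_apply_eq]
    · intro i' _ hi'
      simp [blockDiagonal'_apply_ne D _ _ hi']
    · simp
  simp only [funext_iff, Pi.zero_apply, Sigma.forall, key]

end Matrix

theorem LinearMap.BilinForm.mem_ker_iff_vecMul_toMatrix {R M n : Type*} [CommRing R]
    [AddCommGroup M] [Module R M] [Fintype n] [DecidableEq n] (b : Basis n R M)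
    (C : LinearMap.BilinForm R M) (x : M) :
    x ∈ LinearMap.ker C ↔ b.equivFun x ᵥ* BilinForm.toMatrix b C = 0 := by
  have key : ∀ j, (b.equivFun x ᵥ* BilinForm.toMatrix b C) j = C x (b j) := by
    intro j
    simp only [vecMul, dotProduct, Basis.equivFun_apply, BilinForm.toMatrix_apply]
    conv_rhs => rw [← b.sum_repr x]
    simp only [map_sum, map_smul, LinearMap.sum_apply, LinearMap.smul_apply, smul_eq_mul]
  rw [LinearMap.mem_ker, funext_iff]
  simp only [key, Pi.zero_apply]
  exact ⟨fun h j => by rw [h, LinearMap.zero_apply], fun h => b.ext fun j => by simp [h]⟩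

section Pencil

variable [FiniteDimensional ℂ V] {A B : V →ₗ[ℂ] V →ₗ[ℂ] ℂ}

theorem isRegularValue_iff_finrank_ker_le {μ : ℂ} :
    IsRegularValue A B μ ↔
      ∀ ν : ℂ, finrank ℂ (LinearMap.ker (A + μ • B)) ≤ finrank ℂ (LinearMap.ker (A + ν • B)) := by
  have hrn := fun ν : ℂ => LinearMap.finrank_range_add_finrank_ker (A + ν • B)
  refine forall_congr' fun ν => ?_
  have := hrn μ
  have := hrn ν
  unfold formRank
  omega

theorem coreSubspace_eq_of_ker_eq_of_notMem {L : ℂ → Submodule ℂ V} {S : Set ℂ}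
    {W : Submodule ℂ V} (hS : Sᶜ.Nonempty) (hL : ∀ μ, L μ ≤ LinearMap.ker (A + μ • B))
    (hLrank : ∀ μ ν, finrank ℂ (L μ) = finrank ℂ (L ν))
    (hgen : ∀ μ ∉ S, LinearMap.ker (A + μ • B) = L μ)
    (hLW : ∀ μ, L μ ≤ W) (hWL : W ≤ ⨆ μ ∉ S, L μ) :
    coreSubspace A B = W := by
  obtain ⟨ν₀, hν₀⟩ := hS
  have hreg : ∀ μ ∉ S, IsRegularValue A B μ := fun μ hμ =>
    isRegularValue_iff_finrank_ker_le.mpr fun ν => by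
      rw [hgen μ hμ, hLrank μ ν]
      exact Submodule.finrank_mono (hL ν)
  have hker : ∀ μ, IsRegularValue A B μ → LinearMap.ker (A + μ • B) = L μ := by
    intro μ hμ
    refine (Submodule.eq_of_le_of_finrank_le (hL μ) ?_).symm
    have := isRegularValue_iff_finrank_ker_le.mp hμ ν₀
    rwa [hgen ν₀ hν₀, hLrank ν₀ μ] at this
  refine le_antisymm (iSup₂_le fun μ hμ => (hker μ hμ).trans_le (hLW μ)) ?_
  exact hWL.trans (iSup₂_le fun μ hμ => le_iSup₂_of_le μ (hreg μ hμ) (hgen μ hμ).ge)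

end Pencil

theorem jordanUpper_isUpperTriangular (ν : ℂ) (m : ℕ) : (jordanUpper ν m).IsUpperTriangular := by
  intro i j (hij : j < i)
  have : (j : ℕ) < i := hij
  simp only [jordanUpper]
  rw [if_neg (by omega), if_neg (by omega)]

theorem det_jordanUpper (ν : ℂ) (m : ℕ) : (jordanUpper ν m).det = ν ^ m := by
  simp [det_of_isUpperTriangular (jordanUpper_isUpperTriangular ν m), jordanUpper]

theorem jordanUpper_add_smul_one (a μ : ℂ) (m : ℕ) :
    jordanUpper a m + μ • 1 = jordanUpper (a + μ) m := by
  ext i j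
  by_cases h : i = j
  · simp [jordanUpper, h]
  · have : (i : ℕ) ≠ j := Fin.val_ne_of_ne h
    simp [jordanUpper, h, this]

theorem jordanBlockA_add_smul_jordanBlockB (a μ : ℂ) (m : ℕ) :
    jordanBlockA a m + μ • jordanBlockB m = skewBlock (jordanUpper (a + μ) m) := by
  rw [← jordanUpper_add_smul_one, skewBlock_add_smul, skewBlock, skewBlock, transpose_one]
  rfl

def kronPencil (μ : ℂ) (k : ℕ) : Matrix (Fin (k - 1)) (Fin k) ℂ :=
  kronUpperA k + μ • kronUpperB k

theorem kronBlockA_add_smul_kronBlockB (μ : ℂ) (k : ℕ) :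
    kronBlockA k + μ • kronBlockB k = skewBlock (kronPencil μ k) :=
  (skewBlock_add_smul _ _ μ).symm

/-- `(-μ) ^ (k - 1 - j)`, indexed through `Fin.rev` so that these vectors are the rows of a
Vandermonde matrix with reversed columns. -/
def kronKernelVec (μ : ℂ) (k : ℕ) : Fin k → ℂ :=
  fun j => (-μ) ^ (j.rev : ℕ)

section Kronecker

variable {k : ℕ} (μ : ℂ)

theorem kronPencil_mulVec_apply (y : Fin k → ℂ) (i : Fin (k - 1)) :
    (kronPencil μ k *ᵥ y) i = y (Fin.castLE (k.sub_le 1) i) + μ * y ⟨i + 1, by omega⟩ := by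
  have h₁ : ∀ j : Fin k, (i : ℕ) = j ↔ Fin.castLE (k.sub_le 1) i = j := by simp [Fin.ext_iff]
  have h₂ : ∀ j : Fin k, (i : ℕ) + 1 = j ↔ (⟨i + 1, by omega⟩ : Fin k) = j := by
    simp [Fin.ext_iff]
  simp only [kronPencil, kronUpperA, kronUpperB, mulVec, dotProduct, Matrix.add_apply,
    Matrix.smul_apply, smul_eq_mul, add_mul, Finset.sum_add_distrib, h₁, h₂, mul_ite, ite_mul,
    one_mul, zero_mul, mul_one, mul_zero, Finset.sum_ite_eq, Finset.mem_univ, if_true]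

theorem kronPencil_submatrix_castLE_isUpperTriangular :
    ((kronPencil μ k).submatrix id (Fin.castLE (k.sub_le 1))).IsUpperTriangular := by
  intro i j (hij : j < i)
  have : (j : ℕ) < i := hij
  simp only [kronPencil, kronUpperA, kronUpperB, submatrix_apply, Matrix.add_apply,
    Matrix.smul_apply, id, Fin.val_castLE]
  rw [if_neg (by omega), if_neg (by omega)]
  simp

theorem det_kronPencil_submatrix_castLE :
    ((kronPencil μ k).submatrix id (Fin.castLE (k.sub_le 1))).det = 1 := by
  rw [det_of_isUpperTriangular (kronPencil_submatrix_castLE_isUpperTriangular μ)]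
  simp [kronPencil, kronUpperA, kronUpperB]

theorem eq_zero_of_vecMul_kronPencil_eq_zero {x : Fin (k - 1) → ℂ}
    (h : x ᵥ* kronPencil μ k = 0) : x = 0 := by
  refine eq_zero_of_vecMul_eq_zero (M := (kronPencil μ k).submatrix id (Fin.castLE (k.sub_le 1)))
    (by simp [det_kronPencil_submatrix_castLE]) ?_
  ext j
  simpa [vecMul, dotProduct] using congrFun h (Fin.castLE (k.sub_le 1) j)

theorem kronPencil_mulVec_kronKernelVec : kronPencil μ k *ᵥ kronKernelVec μ k = 0 := by
  funext i
  have hexp : k - (i + 1) = k - (i + 1 + 1) + 1 := by omega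
  simp only [kronPencil_mulVec_apply, kronKernelVec, Fin.val_rev, Fin.val_castLE, hexp, pow_succ,
    Pi.zero_apply]
  ring

theorem kronKernelVec_last (hk : 0 < k) : kronKernelVec μ k ⟨k - 1, by omega⟩ = 1 := by
  simp [kronKernelVec, Fin.val_rev, show k - (k - 1 + 1) = 0 by omega]

theorem eq_zero_of_kronPencil_mulVec_eq_zero (hk : 0 < k) {z : Fin k → ℂ}
    (hz : kronPencil μ k *ᵥ z = 0) (hlast : z ⟨k - 1, by omega⟩ = 0) : z = 0 := by
  have step : ∀ (j : Fin k) (hj : (j : ℕ) + 1 < k), z j = -μ * z ⟨j + 1, hj⟩ := by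
    intro j hj
    have := congrFun hz ⟨j, by omega⟩
    rw [kronPencil_mulVec_apply, Pi.zero_apply] at this
    simp only [Fin.castLE_mk, Fin.eta] at this
    linear_combination this
  have key : ∀ d (j : Fin k), k - 1 - j ≤ d → z j = 0 := by
    intro d
    induction d with
    | zero =>
      intro j hj
      rwa [show j = ⟨k - 1, by omega⟩ from Fin.ext (show (j : ℕ) = k - 1 by omega)]
    | succ d ih =>
      intro j hj
      by_cases hjk : (j : ℕ) + 1 < k
      · rw [step j hjk, ih _ (by simp only; omega), mul_zero]
      · rwa [show j = ⟨k - 1, by omega⟩ from Fin.ext (show (j : ℕ) = k - 1 by omega)]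
  exact funext fun j => key _ j le_rfl

theorem eq_smul_kronKernelVec_of_kronPencil_mulVec_eq_zero (hk : 0 < k) {y : Fin k → ℂ}
    (hy : kronPencil μ k *ᵥ y = 0) : y = y ⟨k - 1, by omega⟩ • kronKernelVec μ k := by
  refine sub_eq_zero.mp (eq_zero_of_kronPencil_mulVec_eq_zero μ hk ?_ ?_)
  · rw [mulVec_sub, mulVec_smul, hy, kronPencil_mulVec_kronKernelVec, smul_zero, sub_zero]
  · simp [kronKernelVec_last μ hk]

theorem span_kronKernelVec_eq_top (k : ℕ) {T : Set ℂ} (hT : T.Infinite) :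
    Submodule.span ℂ ((kronKernelVec · k) '' T) = ⊤ := by
  set t : Fin k → ℂ := fun l => hT.natEmbedding T l
  have ht : Function.Injective t := fun l l' h =>
    Fin.ext ((hT.natEmbedding T).injective (Subtype.ext h))
  have hdet : (Matrix.of fun l => kronKernelVec (t l) k).det ≠ 0 := by
    have : Matrix.of (fun l => kronKernelVec (t l) k)
        = (vandermonde (-t)).submatrix id Fin.revPerm := by
      ext l j
      simp [kronKernelVec]
    rw [this, det_permute']
    exact mul_ne_zero (by simp) (det_vandermonde_ne_zero_iff.mpr (neg_injective.comp ht))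
  refine eq_top_iff.mpr ?_
  rw [← (linearIndependent_rows_of_det_ne_zero hdet).span_eq_top_of_card_eq_finrank' (by simp)]
  refine Submodule.span_mono ?_
  rintro _ ⟨l, rfl⟩
  exact ⟨t l, (hT.natEmbedding T l).2, rfl⟩

end Kronecker

namespace JordanKronecker

variable {kJ kK : ℕ} (eig : Fin kJ → ℂ) (jsz : Fin kJ → ℕ) (ksz : Fin kK → ℕ)

abbrev Index : Type :=
  ((i : Fin kJ) × (Fin (jsz i) ⊕ Fin (jsz i))) ⊕ ((i : Fin kK) × (Fin (ksz i - 1) ⊕ Fin (ksz i)))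

def pencilMatrix (μ : ℂ) : Matrix (Index jsz ksz) (Index jsz ksz) ℂ :=
  fromBlocks (blockDiagonal' fun i => skewBlock (jordanUpper (eig i + μ) (jsz i))) 0 0
    (blockDiagonal' fun i => skewBlock (kronPencil μ (ksz i)))

theorem vecMul_pencilMatrix_eq_zero_iff (μ : ℂ) (c : Index jsz ksz → ℂ) :
    c ᵥ* pencilMatrix eig jsz ksz μ = 0 ↔
      (∀ i, (fun j => c (.inl ⟨i, .inl j⟩)) ᵥ* jordanUpper (eig i + μ) (jsz i) = 0 ∧
        jordanUpper (eig i + μ) (jsz i) *ᵥ (fun j => c (.inl ⟨i, .inr j⟩)) = 0) ∧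
      (∀ i, (fun j => c (.inr ⟨i, .inl j⟩)) ᵥ* kronPencil μ (ksz i) = 0 ∧
        kronPencil μ (ksz i) *ᵥ (fun j => c (.inr ⟨i, .inr j⟩)) = 0) := by
  simp only [pencilMatrix, vecMul_fromBlocks_zero_zero_eq_zero_iff,
    vecMul_blockDiagonal'_eq_zero_iff, vecMul_skewBlock_eq_zero_iff]
  rfl

def kronSupport : (∀ i, Fin (ksz i) → ℂ) →ₗ[ℂ] Index jsz ksz → ℂ where
  toFun y
    | .inl _ => 0
    | .inr ⟨_, .inl _⟩ => 0
    | .inr ⟨i, .inr j⟩ => y i j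
  map_add' _ _ := by
    funext e
    rcases e with _ | ⟨i, j | j⟩ <;> simp
  map_smul' _ _ := by
    funext e
    rcases e with _ | ⟨i, j | j⟩ <;> simp

theorem kronSupport_injective : Function.Injective (kronSupport jsz ksz) :=
  (injective_iff_map_eq_zero _).mpr fun _ hy => funext fun i => funext fun j =>
    congrFun hy (.inr ⟨i, .inr j⟩)

def kronKernelMap (μ : ℂ) : (Fin kK → ℂ) →ₗ[ℂ] ∀ i, Fin (ksz i) → ℂ :=
  LinearMap.pi fun i => (LinearMap.proj i).smulRight (kronKernelVec μ (ksz i))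

theorem vecMul_kronSupport_kronKernelMap (μ : ℂ) (a : Fin kK → ℂ) :
    kronSupport jsz ksz (kronKernelMap ksz μ a) ᵥ* pencilMatrix eig jsz ksz μ = 0 := by
  rw [vecMul_pencilMatrix_eq_zero_iff]
  refine ⟨fun i => ⟨zero_vecMul _, mulVec_zero _⟩, fun i => ⟨zero_vecMul _, ?_⟩⟩
  change kronPencil μ (ksz i) *ᵥ (a i • kronKernelVec μ (ksz i)) = 0
  rw [mulVec_smul, kronPencil_mulVec_kronKernelVec, smul_zero]

theorem kronKernelMap_single (μ : ℂ) (i : Fin kK) :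
    kronKernelMap ksz μ (Pi.single i 1) = Pi.single i (kronKernelVec μ (ksz i)) := by
  funext i'
  rcases eq_or_ne i' i with rfl | h <;> simp [kronKernelMap, *]

variable {ksz}

theorem kronSupport_kronKernelMap_injective (hksz : ∀ i, 0 < ksz i) (μ : ℂ) :
    Function.Injective (kronSupport jsz ksz ∘ₗ kronKernelMap ksz μ) := by
  refine (kronSupport_injective jsz ksz).comp fun a a' h => funext fun i => ?_
  simpa [kronKernelMap, kronKernelVec_last μ (hksz i)] using
    congrFun (congrFun h i) ⟨ksz i - 1, by have := hksz i; omega⟩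

theorem mem_range_of_vecMul_pencilMatrix_eq_zero (hksz : ∀ i, 0 < ksz i) {μ : ℂ}
    (hμ : ∀ i, eig i + μ ≠ 0) {c : Index jsz ksz → ℂ}
    (hc : c ᵥ* pencilMatrix eig jsz ksz μ = 0) :
    c ∈ LinearMap.range (kronSupport jsz ksz ∘ₗ kronKernelMap ksz μ) := by
  obtain ⟨hJ, hK⟩ := (vecMul_pencilMatrix_eq_zero_iff eig jsz ksz μ c).mp hc
  have hdetJ : ∀ i, (jordanUpper (eig i + μ) (jsz i)).det ≠ 0 := fun i => by
    rw [det_jordanUpper]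
    exact pow_ne_zero _ (hμ i)
  refine ⟨fun i => c (.inr ⟨i, .inr ⟨ksz i - 1, by have := hksz i; omega⟩⟩), funext ?_⟩
  rintro (⟨i, j | j⟩ | ⟨i, j | j⟩)
  · exact (congrFun (eq_zero_of_vecMul_eq_zero (hdetJ i) (hJ i).1) j).symm
  · exact (congrFun (eq_zero_of_mulVec_eq_zero (hdetJ i) (hJ i).2) j).symm
  · exact (congrFun (eq_zero_of_vecMul_kronPencil_eq_zero μ (hK i).1) j).symm
  · exact (congrFun (eq_smul_kronKernelVec_of_kronPencil_mulVec_eq_zero μ (hksz i) (hK i).2)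
      j).symm

theorem range_kronSupport_le_iSup {S : Set ℂ} (hS : S.Finite) :
    LinearMap.range (kronSupport jsz ksz)
      ≤ ⨆ μ ∉ S, LinearMap.range (kronSupport jsz ksz ∘ₗ kronKernelMap ksz μ) := by
  set L := ⨆ μ ∉ S, LinearMap.range (kronSupport jsz ksz ∘ₗ kronKernelMap ksz μ)
  have hblock : ∀ i, ⊤ ≤ L.comap (kronSupport jsz ksz ∘ₗ LinearMap.single ℂ _ i) := by
    intro i
    rw [← span_kronKernelVec_eq_top (ksz i) hS.infinite_compl, Submodule.span_le]
    rintro _ ⟨μ, hμ, rfl⟩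
    refine Submodule.mem_iSup_of_mem μ (Submodule.mem_iSup_of_mem hμ ⟨Pi.single i 1, ?_⟩)
    simp [kronKernelMap_single]
  rintro _ ⟨y, rfl⟩
  rw [← Finset.univ_sum_single y, map_sum]
  exact Submodule.sum_mem _ fun i _ => hblock i Submodule.mem_top

section Form

open LinearMap

variable {eig jsz} {A B : V →ₗ[ℂ] V →ₗ[ℂ] ℂ} (b : Basis (Index jsz ksz) ℂ V)

theorem toMatrix_add_smul_eq_pencilMatrix
    (hA : LinearMap.BilinForm.toMatrix b A = fromBlocks
      (blockDiagonal' fun i => jordanBlockA (eig i) (jsz i)) 0 0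
      (blockDiagonal' fun i => kronBlockA (ksz i)))
    (hB : LinearMap.BilinForm.toMatrix b B = fromBlocks
      (blockDiagonal' fun i => jordanBlockB (jsz i)) 0 0
      (blockDiagonal' fun i => kronBlockB (ksz i))) (μ : ℂ) :
    LinearMap.BilinForm.toMatrix b (A + μ • B) = pencilMatrix eig jsz ksz μ := by
  have hJ : (fun i => jordanBlockA (eig i) (jsz i)) + μ • (fun i => jordanBlockB (jsz i))
      = fun i => skewBlock (jordanUpper (eig i + μ) (jsz i)) :=
    funext fun i => jordanBlockA_add_smul_jordanBlockB (eig i) μ (jsz i)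
  have hK : (fun i => kronBlockA (ksz i)) + μ • (fun i => kronBlockB (ksz i))
      = fun i => skewBlock (kronPencil μ (ksz i)) :=
    funext fun i => kronBlockA_add_smul_kronBlockB μ (ksz i)
  rw [map_add, map_smul, hA, hB, fromBlocks_smul, fromBlocks_add, ← blockDiagonal'_smul,
    ← blockDiagonal'_add, ← blockDiagonal'_smul, ← blockDiagonal'_add, hJ, hK]
  simp only [smul_zero, add_zero]
  rfl

theorem mem_ker_iff_vecMul_pencilMatrix
    (hAB : ∀ μ, LinearMap.BilinForm.toMatrix b (A + μ • B) = pencilMatrix eig jsz ksz μ) (μ : ℂ)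
    (c : Index jsz ksz → ℂ) :
    b.equivFun.symm c ∈ ker (A + μ • B) ↔ c ᵥ* pencilMatrix eig jsz ksz μ = 0 := by
  rw [BilinForm.mem_ker_iff_vecMul_toMatrix b, hAB, LinearEquiv.apply_symm_apply]

theorem range_kronKernelMap_le_ker
    (hAB : ∀ μ, LinearMap.BilinForm.toMatrix b (A + μ • B) = pencilMatrix eig jsz ksz μ) (μ : ℂ) :
    range (b.equivFun.symm.toLinearMap ∘ₗ kronSupport jsz ksz ∘ₗ kronKernelMap ksz μ)
      ≤ ker (A + μ • B) := by
  rintro _ ⟨a, rfl⟩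
  exact (mem_ker_iff_vecMul_pencilMatrix b hAB μ _).mpr
    (vecMul_kronSupport_kronKernelMap eig jsz ksz μ a)

theorem ker_eq_range_kronKernelMap
    (hAB : ∀ μ, LinearMap.BilinForm.toMatrix b (A + μ • B) = pencilMatrix eig jsz ksz μ)
    (hksz : ∀ i, 0 < ksz i) {μ : ℂ} (hμ : ∀ i, eig i + μ ≠ 0) :
    ker (A + μ • B)
      = range (b.equivFun.symm.toLinearMap ∘ₗ kronSupport jsz ksz ∘ₗ kronKernelMap ksz μ) := by
  refine le_antisymm (fun x hx => ?_) (range_kronKernelMap_le_ker b hAB μ)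
  obtain ⟨c, rfl⟩ := b.equivFun.symm.surjective x
  obtain ⟨a, rfl⟩ := mem_range_of_vecMul_pencilMatrix_eq_zero eig jsz hksz hμ
    ((mem_ker_iff_vecMul_pencilMatrix b hAB μ c).mp hx)
  exact ⟨a, rfl⟩

variable [FiniteDimensional ℂ V]

theorem coreSubspace_eq_range_kronSupport
    (hAB : ∀ μ, LinearMap.BilinForm.toMatrix b (A + μ • B) = pencilMatrix eig jsz ksz μ)
    (hksz : ∀ i, 0 < ksz i) :
    coreSubspace A B = range (b.equivFun.symm.toLinearMap ∘ₗ kronSupport jsz ksz) := by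
  have hS : (Set.range fun i => -eig i).Finite := Set.finite_range _
  refine coreSubspace_eq_of_ker_eq_of_notMem hS.infinite_compl.nonempty
    (range_kronKernelMap_le_ker b hAB) (fun μ ν => ?_)
    (fun μ hμ => ker_eq_range_kronKernelMap b hAB hksz fun i hi =>
      hμ ⟨i, by linear_combination -hi⟩)
    (fun μ => by rw [← comp_assoc]; exact range_comp_le_range _ _) ?_
  · have hinj : ∀ μ, Function.Injective
        (b.equivFun.symm.toLinearMap ∘ₗ kronSupport jsz ksz ∘ₗ kronKernelMap ksz μ) := fun μ =>
      b.equivFun.symm.injective.comp (kronSupport_kronKernelMap_injective jsz hksz μ)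
    rw [finrank_range_of_inj (hinj μ), finrank_range_of_inj (hinj ν)]
  · calc range (b.equivFun.symm.toLinearMap ∘ₗ kronSupport jsz ksz)
        = (range (kronSupport jsz ksz)).map b.equivFun.symm.toLinearMap := range_comp _ _
      _ ≤ (⨆ μ ∉ Set.range fun i => -eig i,
            range (kronSupport jsz ksz ∘ₗ kronKernelMap ksz μ)).map b.equivFun.symm.toLinearMap :=
        Submodule.map_mono (range_kronSupport_le_iSup jsz hS)
      _ = _ := by simp only [Submodule.map_iSup, ← range_comp]

theorem finrank_coreSubspace
    (hAB : ∀ μ, LinearMap.BilinForm.toMatrix b (A + μ • B) = pencilMatrix eig jsz ksz μ)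
    (hksz : ∀ i, 0 < ksz i) :
    finrank ℂ (coreSubspace A B) = ∑ i, ksz i := by
  have hinj : Function.Injective (b.equivFun.symm.toLinearMap ∘ₗ kronSupport jsz ksz) :=
    b.equivFun.symm.injective.comp (kronSupport_injective jsz ksz)
  rw [coreSubspace_eq_range_kronSupport b hAB hksz, finrank_range_of_inj hinj,
    Module.finrank_pi_fintype]
  simp only [Module.finrank_fin_fun]

end Form

end JordanKronecker

theorem dim_core_eq_dim_sub_halfrank_sub_deg_general
    {V : Type*} [AddCommGroup V] [Module ℂ V] [FiniteDimensional ℂ V]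
    (A B : V →ₗ[ℂ] V →ₗ[ℂ] ℂ)
    (kJ kK : ℕ) (jsz : Fin kJ → ℕ) (ksz : Fin kK → ℕ)
    (hksz : ∀ i, 0 < ksz i) (eig : Fin kJ → ℂ)
    (b : Basis (((i : Fin kJ) × (Fin (jsz i) ⊕ Fin (jsz i))) ⊕
                ((i : Fin kK) × (Fin (ksz i - 1) ⊕ Fin (ksz i)))) ℂ V)
    (hAmat : BilinForm.toMatrix b A
      = Matrix.fromBlocks
          (Matrix.blockDiagonal' (fun i => jordanBlockA (eig i) (jsz i))) 0 0
          (Matrix.blockDiagonal' (fun i => kronBlockA (ksz i))))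
    (hBmat : BilinForm.toMatrix b B
      = Matrix.fromBlocks
          (Matrix.blockDiagonal' (fun i => jordanBlockB (jsz i))) 0 0
          (Matrix.blockDiagonal' (fun i => kronBlockB (ksz i)))) :
    (finrank ℂ (coreSubspace A B) : ℤ)
      = (finrank ℂ V : ℤ)
        - ((∑ i, (jsz i : ℤ)) + ∑ i, ((ksz i : ℤ) - 1))   -- = rk(pencil)/2
        - ∑ i, (jsz i : ℤ) := by                          -- = deg p
  rw [JordanKronecker.finrank_coreSubspace b
      (JordanKronecker.toMatrix_add_smul_eq_pencilMatrix b hAmat hBmat) hksz,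
    finrank_eq_card_basis b]
  simp only [Fintype.card_sum, Fintype.card_sigma, Fintype.card_fin]
  push_cast [Nat.cast_pred (hksz _), Finset.sum_add_distrib, Finset.sum_sub_distrib]
  ring

/-- Let `(A, B)` be a pencil of skew-symmetric bilinear forms on a
finite-dimensional complex vector space admitting a Jordan–Kronecker
decomposition with Jordan blocks of sizes `2·jsz i` (eigenvalues `eig i`) and
Kronecker blocks of sizes `2·ksz i - 1`. Then
`dim K = dim V − (1/2)·rk(pencil) − deg p`, where
`rk(pencil)/2 = Σ jsz i + Σ (ksz i − 1)` and `deg p = Σ jsz i` is the degree of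
the characteristic polynomial `p(λ) = Π (λ − λ_j)^{n_j}`. -/
theorem dim_core_eq_dim_sub_halfrank_sub_deg
    {V : Type*} [AddCommGroup V] [Module ℂ V] [FiniteDimensional ℂ V]
    (A B : V →ₗ[ℂ] V →ₗ[ℂ] ℂ)
    (kJ kK : ℕ) (jsz : Fin kJ → ℕ) (ksz : Fin kK → ℕ)
    (hjsz : ∀ i, 0 < jsz i) (hksz : ∀ i, 0 < ksz i) (eig : Fin kJ → ℂ)
    (b : Basis (((i : Fin kJ) × (Fin (jsz i) ⊕ Fin (jsz i))) ⊕
                ((i : Fin kK) × (Fin (ksz i - 1) ⊕ Fin (ksz i)))) ℂ V)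
    (hAmat : BilinForm.toMatrix b A
      = Matrix.fromBlocks
          (Matrix.blockDiagonal' (fun i => jordanBlockA (eig i) (jsz i))) 0 0
          (Matrix.blockDiagonal' (fun i => kronBlockA (ksz i))))
    (hBmat : BilinForm.toMatrix b B
      = Matrix.fromBlocks
          (Matrix.blockDiagonal' (fun i => jordanBlockB (jsz i))) 0 0
          (Matrix.blockDiagonal' (fun i => kronBlockB (ksz i)))) :
    (finrank ℂ (coreSubspace A B) : ℤ)
      = (finrank ℂ V : ℤ)
        - ((∑ i, (jsz i : ℤ)) + ∑ i, ((ksz i : ℤ) - 1))   -- = rk(pencil)/2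
        - ∑ i, (jsz i : ℤ) :=
  dim_core_eq_dim_sub_halfrank_sub_deg_general A B kJ kK jsz ksz hksz eig b hAmat hBmat
end
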